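/- arXiv:1905.02897 — 2 statements merged into one kernel-verified Lean document; each statement's English description precedes it below -/
import Mathlib

section
/- Under assumption (A), for every t ∈ [l,u] and every r > r₀(t), there exist a point c_t ∈ ℝ^d and a radius ρ_t > 0 such that the open ball A_t = B_{ρ_t}(c_t) satisfies: A_t ⊆ C_r(G(t)); d(z, G(t)) ≥ 3ρ_t for all z ∈ A_t (in particular A_t ∩ (G(t) ⊕ B_{2ρ_t}(0)) = ∅ and A_t ∩ G(t) = ∅); and f(x) > l − ζ for all x ∈ A_t. -/
open MeasureTheory Filter Set
open scoped Pointwise ENNReal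

noncomputable section

/-- The density level set `G(t) = {x : f x ≥ t}`. -/
def levelSet {d : ℕ} (f : EuclideanSpace ℝ (Fin d) → ℝ) (t : ℝ) :
    Set (EuclideanSpace ℝ (Fin d)) := {x | t ≤ f x}

/-- The `r`-convex hull `C_r(A)`: the intersection of the complements of all open balls of
radius `r` that do not meet `A`. -/
def rConvexHull {d : ℕ} (r : ℝ) (A : Set (EuclideanSpace ℝ (Fin d))) :
    Set (EuclideanSpace ℝ (Fin d)) :=
  ⋂ c ∈ {c : EuclideanSpace ℝ (Fin d) | Metric.ball c r ∩ A = ∅}, (Metric.ball c r)ᶜ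

/-- The optimal smoothing parameter `r₀(t) = sup {γ > 0 : C_γ(G(t)) = G(t)}`. -/
def r0 {d : ℕ} (f : EuclideanSpace ℝ (Fin d) → ℝ) (t : ℝ) : ℝ :=
  sSup {γ : ℝ | 0 < γ ∧ rConvexHull γ (levelSet f t) = levelSet f t}

/-- Finite (bounded) variation of `K` on `ℝ^d`, in the distributional (BV) sense: the
integrals of `K` against divergences of `C¹` compactly supported vector fields of norm at
most one are uniformly bounded. -/
def FiniteVariation {d : ℕ} (K : EuclideanSpace ℝ (Fin d) → ℝ) : Prop :=
  ∃ C : ℝ, ∀ φ : EuclideanSpace ℝ (Fin d) → EuclideanSpace ℝ (Fin d),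
    ContDiff ℝ 1 φ → HasCompactSupport φ → (∀ x, ‖φ x‖ ≤ 1) →
    (∫ x, K x * ∑ i, fderiv ℝ φ x (EuclideanSpace.single i 1) i) ≤ C

/-- The rate `(log n / n)^(p/(d+2p))`. -/
def rateP (d p : ℕ) (n : ℕ) : ℝ := (Real.log n / n) ^ ((p : ℝ) / (d + 2 * p))

/-- The rate `(log n / n)^(2/(d+1))`. -/
def rateH (d : ℕ) (n : ℕ) : ℝ := (Real.log n / n) ^ ((2 : ℝ) / (d + 1))

/-- The bandwidth rate `(log n / n)^(1/(d+2p))`. -/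
def rateBand (d p : ℕ) (n : ℕ) : ℝ := (Real.log n / n) ^ ((1 : ℝ) / (d + 2 * p))

/-- The sequence `D_n = M (log n / n)^(p/(d+2p))` of assumption (D). -/
def Dseq (d p : ℕ) (M : ℝ) : ℕ → ℝ := fun n => M * rateP d p n

/-- A closed ball of radius `γ` rolls freely in the set `A`. -/
def RollsFreelyIn {d : ℕ} (γ : ℝ) (A : Set (EuclideanSpace ℝ (Fin d))) : Prop :=
  ∀ b ∈ frontier A, ∃ x, b ∈ Metric.closedBall x γ ∧ Metric.closedBall x γ ⊆ A

/-- The threshold `f_τ = sup {y > 0 : ∫ f · 1{f ≥ y} ≥ 1 - τ}`. -/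
def ftau {d : ℕ} (f : EuclideanSpace ℝ (Fin d) → ℝ) (τ : ℝ) : ℝ :=
  sSup {y : ℝ | 0 < y ∧ 1 - τ ≤ ∫ x in {z : EuclideanSpace ℝ (Fin d) | y ≤ f z}, f x}

/-- The level set `L(τ) = {x : f x ≥ f_τ}`. -/
def Ltau {d : ℕ} (f : EuclideanSpace ℝ (Fin d) → ℝ) (τ : ℝ) :
    Set (EuclideanSpace ℝ (Fin d)) := levelSet f (ftau f τ)

/-- Distance in measure `d_μ(A,B) = μ(A △ B)` (Lebesgue measure of the symmetric
difference). -/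
def dmu {d : ℕ} (A B : Set (EuclideanSpace ℝ (Fin d))) : ℝ :=
  (volume (symmDiff A B)).toReal

/-- The data of the density level set estimation problem: a sequence of random points `X`
with common density `f`, a kernel `K`, a bandwidth sequence `h`, levels `l ≤ u`, and the
constants `ζ`, `m`, `k`, the order `p` and the open set `U` of assumption (A). -/
structure DensitySetup (d : ℕ) (Ω : Type) [MeasurableSpace Ω] where
  P : Measure Ω
  X : ℕ → Ω → EuclideanSpace ℝ (Fin d)
  f : EuclideanSpace ℝ (Fin d) → ℝ
  K : EuclideanSpace ℝ (Fin d) → ℝ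
  h : ℕ → ℝ
  l : ℝ
  u : ℝ
  ζ : ℝ
  m : ℝ
  k : ℝ
  p : ℕ
  U : Set (EuclideanSpace ℝ (Fin d))

namespace DensitySetup

variable {d : ℕ} {Ω : Type} [MeasurableSpace Ω] (S : DensitySetup d Ω)

/-- Basic probabilistic assumptions: `P` is a probability measure and the `X i` are i.i.d.
random vectors with density `f` (w.r.t. Lebesgue measure). -/
def Base : Prop :=
  IsProbabilityMeasure S.P ∧ (∀ i, Measurable (S.X i)) ∧
  ProbabilityTheory.iIndepFun S.X S.P ∧
  (∀ x, 0 ≤ S.f x) ∧ Measurable S.f ∧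
  (∀ i, S.P.map (S.X i) = volume.withDensity fun x => ENNReal.ofReal (S.f x))

/-- Assumption (A): `l ≤ u < sup f < ∞`; `f` is of class `C^p`, `p ≥ 1`, on the bounded
open set `U ⊇ closure (G(l-ζ)) \ interior (G(u+ζ))`, `G(u+ζ)` is bounded, the gradient of
`f` satisfies `|∇f| ≥ m > 0` and is `k`-Lipschitz on `U`; moreover every level set `G(t)`,
`t ∈ [l,u]`, is compact, nonempty, nonconvex and `r`-convex for some `r > 0`. -/
def AssumptionA : Prop :=
  S.l ≤ S.u ∧ BddAbove (Set.range S.f) ∧ S.u < sSup (Set.range S.f) ∧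
  1 ≤ S.p ∧ 0 < S.ζ ∧ 0 < S.m ∧ 0 < S.k ∧
  IsOpen S.U ∧ Bornology.IsBounded S.U ∧
  closure (levelSet S.f (S.l - S.ζ)) \ interior (levelSet S.f (S.u + S.ζ)) ⊆ S.U ∧
  Bornology.IsBounded (levelSet S.f (S.u + S.ζ)) ∧
  ContDiffOn ℝ (S.p : ℕ∞) S.f S.U ∧
  (∀ x ∈ S.U, S.m ≤ ‖gradient S.f x‖) ∧
  (∀ x ∈ S.U, ∀ y ∈ S.U, ‖gradient S.f x - gradient S.f y‖ ≤ S.k * ‖x - y‖) ∧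
  (∀ t ∈ Set.Icc S.l S.u, IsCompact (levelSet S.f t) ∧ (levelSet S.f t).Nonempty ∧
    ¬Convex ℝ (levelSet S.f t) ∧
    ∃ r > 0, rConvexHull r (levelSet S.f t) = levelSet S.f t)

/-- Assumption (K): `K` is a continuous kernel of order at least `p`, with bounded support
and finite variation, and the bandwidth `h n` is of exact order `(log n / n)^(1/(d+2p))`. -/
def AssumptionK : Prop :=
  Continuous S.K ∧ Bornology.IsBounded (Function.support S.K) ∧ FiniteVariation S.K ∧
  (∫ x, S.K x) = 1 ∧
  (∀ α : Fin d → ℕ, 1 ≤ ∑ i, α i → (∑ i, α i) < S.p →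
    (∫ x : EuclideanSpace ℝ (Fin d), (∏ i, (x i) ^ (α i)) * S.K x) = 0) ∧
  ∃ c₁ > 0, ∃ c₂ > 0, ∀ᶠ n in atTop,
    c₁ * rateBand d S.p n ≤ S.h n ∧ S.h n ≤ c₂ * rateBand d S.p n

/-- The kernel density estimator `f_n`. -/
def fn (n : ℕ) (ω : Ω) (x : EuclideanSpace ℝ (Fin d)) : ℝ :=
  (1 / (n * S.h n ^ d)) * ∑ i ∈ Finset.range n, S.K ((S.h n)⁻¹ • (x - S.X i ω))

/-- The sample `𝒳_n = {X 0, …, X (n-1)}` as a set. -/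
def sample (n : ℕ) (ω : Ω) : Set (EuclideanSpace ℝ (Fin d)) := {y | ∃ i < n, S.X i ω = y}

/-- `𝒳_n⁺(t) = {X ∈ 𝒳_n : f_n X ≥ t + D n}`. -/
def Xplus (D : ℕ → ℝ) (t : ℝ) (n : ℕ) (ω : Ω) : Set (EuclideanSpace ℝ (Fin d)) :=
  {y ∈ S.sample n ω | t + D n ≤ S.fn n ω y}

/-- `𝒳_n⁻(t) = {X ∈ 𝒳_n : f_n X < t - D n}`. -/
def Xminus (D : ℕ → ℝ) (t : ℝ) (n : ℕ) (ω : Ω) : Set (EuclideanSpace ℝ (Fin d)) :=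
  {y ∈ S.sample n ω | S.fn n ω y < t - D n}

/-- The estimator `r̂₀(t) = sup {γ > 0 : C_γ(𝒳_n⁺(t)) ∩ 𝒳_n⁻(t) = ∅}`. -/
def rhat (D : ℕ → ℝ) (t : ℝ) (n : ℕ) (ω : Ω) : ℝ :=
  sSup {γ : ℝ | 0 < γ ∧ rConvexHull γ (S.Xplus D t n ω) ∩ S.Xminus D t n ω = ∅}

/-- The empirical probability `𝑃_n(A)` of a set `A`. -/
def Pn (n : ℕ) (ω : Ω) (A : Set (EuclideanSpace ℝ (Fin d))) : ℝ :=
  (∑ i ∈ Finset.range n, A.indicator (fun _ => (1 : ℝ)) (S.X i ω)) / n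

/-- The threshold estimator
`f̂_τ = sup {t > 0 : 𝑃_n(C_{ν r̂₀(t)}(𝒳_n⁺(t))) ≥ 1 - τ}`. -/
def fhat (ν : ℝ) (D : ℕ → ℝ) (τ : ℝ) (n : ℕ) (ω : Ω) : ℝ :=
  sSup {t : ℝ | 0 < t ∧
    1 - τ ≤ S.Pn n ω (rConvexHull (ν * S.rhat D t n ω) (S.Xplus D t n ω))}

end DensitySetup



section AuxGeom

open Metric InnerProductSpace

theorem le_infDist_iff' {α : Type*} [MetricSpace α] {A : Set α} {x : α} {r : ℝ}
    (hA : A.Nonempty) : r ≤ Metric.infDist x A ↔ ∀ y ∈ A, r ≤ dist x y := by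
  rw [← not_lt, Metric.infDist_lt_iff hA]
  push_neg
  rfl

theorem mem_rConvexHull_iff {d : ℕ} {r : ℝ} {A : Set (EuclideanSpace ℝ (Fin d))}
    (hA : A.Nonempty) (x : EuclideanSpace ℝ (Fin d)) :
    x ∈ rConvexHull r A ↔ ∀ c, r ≤ Metric.infDist c A → r ≤ dist x c := by
  unfold rConvexHull
  simp only [Set.mem_iInter, Set.mem_compl_iff, Metric.mem_ball, Set.mem_setOf_eq, not_lt]
  constructor
  · intro h c hc
    apply h
    rw [Set.eq_empty_iff_forall_notMem]
    rintro y ⟨hy1, hy2⟩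
    have := (le_infDist_iff' hA).1 hc y hy2
    rw [Metric.mem_ball] at hy1
    rw [dist_comm] at this
    linarith
  · intro h c hc
    apply h
    rw [le_infDist_iff' hA]
    intro y hy
    rw [dist_comm]
    by_contra hlt
    push_neg at hlt
    rw [Set.eq_empty_iff_forall_notMem] at hc
    exact hc y ⟨Metric.mem_ball.2 hlt, hy⟩

theorem subset_rConvexHull {d : ℕ} (r : ℝ) (A : Set (EuclideanSpace ℝ (Fin d))) :
    A ⊆ rConvexHull r A := by
  intro x hx
  unfold rConvexHull
  simp only [Set.mem_iInter, Set.mem_compl_iff, Set.mem_setOf_eq]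
  intro c hc hmem
  rw [Set.eq_empty_iff_forall_notMem] at hc
  exact hc x ⟨hmem, hx⟩

theorem comb_norm_sq {F : Type*} [NormedAddCommGroup F] [InnerProductSpace ℝ F]
    (X Y : F) (a b : ℝ) (h : a + b = 1) :
    ‖a • X + b • Y‖ ^ 2 = a * ‖X‖ ^ 2 + b * ‖Y‖ ^ 2 - a * b * ‖X - Y‖ ^ 2 := by
  have h1 : ‖a • X + b • Y‖ ^ 2 = ‖a • X‖ ^ 2 + 2 * inner ℝ (a • X) (b • Y) + ‖b • Y‖ ^ 2 :=
    norm_add_sq_real _ _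
  have h2 : ‖X - Y‖ ^ 2 = ‖X‖ ^ 2 - 2 * inner ℝ X Y + ‖Y‖ ^ 2 := norm_sub_sq_real _ _
  have h3 : (inner ℝ (a • X) (b • Y) : ℝ) = a * b * inner ℝ X Y := by
    rw [real_inner_smul_left, real_inner_smul_right]; ring
  have h4 : ‖a • X‖ ^ 2 = a ^ 2 * ‖X‖ ^ 2 := by
    rw [norm_smul, mul_pow]; simp [sq_abs]
  have h5 : ‖b • Y‖ ^ 2 = b ^ 2 * ‖Y‖ ^ 2 := by
    rw [norm_smul, mul_pow]; simp [sq_abs]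
  rw [h1, h3, h4, h5]
  linear_combination (a * ‖X‖ ^ 2 + b * ‖Y‖ ^ 2) * h + a * b * h2

theorem le_of_sq_le_sq' (a b : ℝ) (h : a ^ 2 ≤ b ^ 2) (ha : 0 ≤ a) (hb : 0 ≤ b) :
    a ≤ b := by nlinarith

theorem lemA {F : Type*} [NormedAddCommGroup F] [InnerProductSpace ℝ F]
    (c qa qb : F) (θ θ' γ ς : ℝ) (hθ0 : 0 ≤ θ) (hθ'0 : 0 ≤ θ') (hθsum : θ + θ' = 1)
    (hγ0 : 0 < γ) (hς0 : 0 < ς)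
    (hna : γ + ς ≤ dist c qa) (hnb : γ + ς ≤ dist c qb)
    (hlt : dist c (θ • qa + θ' • qb) < γ) :
    γ * (8 * ς) < ‖qa - qb‖ ^ 2 := by
  have hdec : c - (θ • qa + θ' • qb) = θ • (c - qa) + θ' • (c - qb) := by
    have h1 : θ' = 1 - θ := by linarith
    rw [h1]; module
  have hid : dist c (θ • qa + θ' • qb) ^ 2
      = θ * dist c qa ^ 2 + θ' * dist c qb ^ 2 - θ * θ' * ‖qa - qb‖ ^ 2 := by
    rw [dist_eq_norm, hdec, comb_norm_sq _ _ _ _ hθsum]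
    have h1 : c - qa - (c - qb) = qb - qa := by abel
    rw [h1, ← dist_eq_norm c qa, ← dist_eq_norm c qb, norm_sub_rev]
  have hlt2 : dist c (θ • qa + θ' • qb) ^ 2 < γ ^ 2 := by
    nlinarith [dist_nonneg (x := c) (y := θ • qa + θ' • qb)]
  have hθθ' : θ * θ' ≤ 1 / 4 := by nlinarith [sq_nonneg (θ - θ')]
  have hna2 : (γ + ς) ^ 2 ≤ dist c qa ^ 2 := by nlinarith
  have hnb2 : (γ + ς) ^ 2 ≤ dist c qb ^ 2 := by nlinarith
  nlinarith [sq_nonneg ‖qa - qb‖, mul_le_mul_of_nonneg_left hna2 hθ0,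
    mul_le_mul_of_nonneg_left hnb2 hθ'0, mul_pos hς0 hς0, mul_pos hγ0 hς0]

theorem lemB {F : Type*} [NormedAddCommGroup F] [InnerProductSpace ℝ F]
    (q y e : F) (l lam r s : ℝ)
    (hl0 : 0 ≤ l) (hllam : l ≤ lam) (hlam1 : lam < 1)
    (hr0 : 0 ≤ r) (hs0 : 0 ≤ s)
    (hlam2rs : lam * dist y q ^ 2 ≤ 2 * r * s)
    (hqe : r + s ≤ dist q e) (hye : r ≤ dist y e) :
    r ^ 2 + (1 - lam) * (2 * r * s - lam * dist y q ^ 2)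
      ≤ dist (q + l • (y - q)) e ^ 2 := by
  have hdec : q + l • (y - q) - e = (1 - l) • (q - e) + l • (y - e) := by module
  have hid : dist (q + l • (y - q)) e ^ 2
      = (1 - l) * dist q e ^ 2 + l * dist y e ^ 2 - (1 - l) * l * dist y q ^ 2 := by
    rw [dist_eq_norm, hdec, comb_norm_sq _ _ _ _ (by ring : (1 - l) + l = 1)]
    have h1 : q - e - (y - e) = q - y := by abel
    rw [h1, ← dist_eq_norm q e, ← dist_eq_norm y e, ← dist_eq_norm q y, dist_comm q y]
  rw [hid]
  have hΔ2 : 0 ≤ dist y q ^ 2 := sq_nonneg _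
  have hmono : (1 - lam) * (2 * r * s - lam * dist y q ^ 2)
      ≤ (1 - l) * (2 * r * s - l * dist y q ^ 2) := by
    apply mul_le_mul (by linarith) (by nlinarith) (by nlinarith) (by linarith)
  have h2 : (1 - l) * (r + s) ^ 2 ≤ (1 - l) * dist q e ^ 2 := by
    apply mul_le_mul_of_nonneg_left _ (by linarith)
    nlinarith
  have h3 : l * r ^ 2 ≤ l * dist y e ^ 2 := by
    apply mul_le_mul_of_nonneg_left _ hl0
    nlinarith
  nlinarith [mul_nonneg (show (0:ℝ) ≤ 1 - l by linarith) (sq_nonneg s)]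

theorem exists_inner_ball {d : ℕ} (f : EuclideanSpace ℝ (Fin d) → ℝ)
    (U : Set (EuclideanSpace ℝ (Fin d))) (hU : IsOpen U)
    (m k t : ℝ) (hm : 0 < m) (hk : 0 ≤ k)
    (hf : ContDiffOn ℝ 1 f U)
    (hgrad : ∀ x ∈ U, m ≤ ‖gradient f x‖)
    (hlip : ∀ x ∈ U, ∀ y ∈ U, ‖gradient f x - gradient f y‖ ≤ k * ‖x - y‖)
    (x₀ : EuclideanSpace ℝ (Fin d)) (hx₀U : x₀ ∈ U) (hfx₀ : t ≤ f x₀)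
    (s : ℝ) (hs0 : 0 < s) (hsm : 9 * (k * s) ≤ m)
    (hsU : Metric.closedBall x₀ (3 * s) ⊆ U) :
    ∃ q, dist q x₀ = 2 * s ∧ Metric.closedBall q s ⊆ {x | t ≤ f x} := by
  have hg₀ : 0 < ‖gradient f x₀‖ := lt_of_lt_of_le hm (hgrad _ hx₀U)
  set g₀ := gradient f x₀ with hg₀def
  set q := x₀ + (2 * s / ‖g₀‖) • g₀ with hqdef
  have hdq : dist q x₀ = 2 * s := by
    rw [hqdef, dist_eq_norm, add_sub_cancel_left, norm_smul]
    rw [Real.norm_eq_abs, abs_div, abs_of_pos (by linarith), abs_of_pos hg₀]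
    field_simp
  refine ⟨q, hdq, ?_⟩
  intro w hw
  rw [Metric.mem_closedBall] at hw
  have hw3 : w ∈ Metric.closedBall x₀ (3 * s) := by
    rw [Metric.mem_closedBall]
    calc dist w x₀ ≤ dist w q + dist q x₀ := dist_triangle _ _ _
    _ ≤ s + 2 * s := add_le_add hw hdq.le
    _ = 3 * s := by ring
  set L := (toDual ℝ (EuclideanSpace ℝ (Fin d)) g₀ : EuclideanSpace ℝ (Fin d) →L[ℝ] ℝ)
    with hLdef
  have hderiv : ∀ x ∈ Metric.closedBall x₀ (3 * s),
      HasFDerivWithinAt f (fderiv ℝ f x) (Metric.closedBall x₀ (3 * s)) x := by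
    intro x hx
    have hxU : x ∈ U := hsU hx
    exact ((hf.contDiffAt (hU.mem_nhds hxU)).differentiableAt
      one_ne_zero).hasFDerivAt.hasFDerivWithinAt
  have hbound : ∀ x ∈ Metric.closedBall x₀ (3 * s),
      ‖fderiv ℝ f x - L‖ ≤ k * (3 * s) := by
    intro x hx
    have hxU : x ∈ U := hsU hx
    have h1 : fderiv ℝ f x = toDual ℝ _ (gradient f x) := by
      rw [gradient, LinearIsometryEquiv.apply_symm_apply]
    rw [hLdef, h1, ← LinearIsometryEquiv.map_sub, LinearIsometryEquiv.norm_map]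
    calc ‖gradient f x - g₀‖ ≤ k * ‖x - x₀‖ := hlip x hxU x₀ hx₀U
    _ ≤ k * (3 * s) := by
        apply mul_le_mul_of_nonneg_left _ hk
        rw [← dist_eq_norm]; exact hx
  have hmvt := (convex_closedBall x₀ (3 * s)).norm_image_sub_le_of_norm_hasFDerivWithin_le'
    hderiv hbound (Metric.mem_closedBall_self (by linarith)) hw3
  have hlow : f w - f x₀ - L (w - x₀) ≥ -(k * (3 * s) * (3 * s)) := by
    have h5 : k * (3 * s) * ‖w - x₀‖ ≤ k * (3 * s) * (3 * s) := by
      apply mul_le_mul_of_nonneg_left _ (by positivity)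
      rw [← dist_eq_norm]; exact hw3
    have h6 : |f w - f x₀ - L (w - x₀)| ≤ k * (3 * s) * (3 * s) := by
      rw [← Real.norm_eq_abs]; exact hmvt.trans h5
    linarith [neg_le_of_abs_le h6]
  have hℓ : L (w - x₀) ≥ s * ‖g₀‖ := by
    have hsplit : w - x₀ = (2 * s / ‖g₀‖) • g₀ + (w - q) := by
      rw [hqdef]; abel
    rw [hLdef, toDual_apply_apply, hsplit, inner_add_right, real_inner_smul_right,
      real_inner_self_eq_norm_sq]
    have h3 : |(inner ℝ g₀ (w - q) : ℝ)| ≤ ‖g₀‖ * s := by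
      calc |(inner ℝ g₀ (w - q) : ℝ)| ≤ ‖g₀‖ * ‖w - q‖ := abs_real_inner_le_norm _ _
      _ ≤ ‖g₀‖ * s := by
          apply mul_le_mul_of_nonneg_left _ (norm_nonneg _)
          rw [← dist_eq_norm]; exact hw
    have h4 := neg_le_of_abs_le h3
    have h2 : (2 * s / ‖g₀‖) * ‖g₀‖ ^ 2 = 2 * s * ‖g₀‖ := by field_simp
    rw [h2]
    linarith
  have hgm : m ≤ ‖g₀‖ := hgrad _ hx₀U
  have : f w ≥ t := by nlinarith
  exact this

end AuxGeom

set_option maxHeartbeats 1000000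

/-- Proposition B.1: under (A), for every `t ∈ [l,u]` and every `r > r₀(t)` there is an
open ball `A_t = B_{ρ_t}(c_t)` with `A_t ⊆ C_r(G(t))`, `d(z, G(t)) ≥ 3 ρ_t` for all
`z ∈ A_t` (in particular `A_t ∩ (G(t) ⊕ B_{2ρ_t}(0)) = ∅` and `A_t ∩ G(t) = ∅`), and
`f > l - ζ` on `A_t`. -/
theorem statement12 {d : ℕ} {Ω : Type} [MeasurableSpace Ω] (S : DensitySetup d Ω)
    (hA : S.AssumptionA) :
    ∀ t ∈ Set.Icc S.l S.u, ∀ r : ℝ, r0 S.f t < r →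
      ∃ c : EuclideanSpace ℝ (Fin d), ∃ ρ : ℝ, 0 < ρ ∧
        Metric.ball c ρ ⊆ rConvexHull r (levelSet S.f t) ∧
        (∀ z ∈ Metric.ball c ρ, 3 * ρ ≤ Metric.infDist z (levelSet S.f t)) ∧
        Metric.ball c ρ ∩ (levelSet S.f t + Metric.ball (0 : EuclideanSpace ℝ (Fin d)) (2 * ρ)) = ∅ ∧
        Metric.ball c ρ ∩ levelSet S.f t = ∅ ∧
        (∀ x ∈ Metric.ball c ρ, S.l - S.ζ < S.f x) := by
  classical
  obtain ⟨hlu, hbdd, hsup, hp1, hζ, hm, hk, hUopen, hUbdd, hUsub, hGub, hfC, hgrad, hglip,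
    hlevel⟩ := hA
  intro t ht r hr
  obtain ⟨hGcomp, hGne, hGnc, r₁, hr₁pos, hr₁hull⟩ := hlevel t ht
  set G := levelSet S.f t with hGdef
  have hGclosed : IsClosed G := hGcomp.isClosed
  have hfc1 : ContDiffOn ℝ 1 S.f S.U := hfC.of_le (by exact_mod_cast hp1)
  have hGlζ : G ⊆ levelSet S.f (S.l - S.ζ) := by
    intro x hx
    have hx' : t ≤ S.f x := hx
    show S.l - S.ζ ≤ S.f x
    linarith [ht.1]
  have hbdryU : ∀ x₀ ∈ G, x₀ ∉ interior G → x₀ ∈ S.U := by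
    intro x₀ hx₀ hni
    apply hUsub
    refine ⟨subset_closure (hGlζ hx₀), ?_⟩
    intro hmem
    apply hni
    have hsub : levelSet S.f (S.u + S.ζ) ⊆ G := by
      intro x hx
      have hx' : S.u + S.ζ ≤ S.f x := hx
      show t ≤ S.f x
      linarith [ht.2]
    exact interior_mono hsub hmem
  -- interior ball near any point of G
  have hL5 : ∀ x₀ ∈ G, ∀ ε > 0, ∃ q s, 0 < s ∧ s ≤ ε ∧ dist q x₀ ≤ 2 * s ∧
      Metric.closedBall q s ⊆ G := by
    intro x₀ hx₀ ε hε
    by_cases hint : x₀ ∈ interior G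
    · obtain ⟨ε', hε'0, hball⟩ := Metric.isOpen_iff.1 isOpen_interior x₀ hint
      refine ⟨x₀, min ε (ε' / 2), lt_min hε (by linarith), min_le_left _ _, ?_, ?_⟩
      · rw [dist_self]; positivity
      · intro x hx
        rw [Metric.mem_closedBall] at hx
        apply interior_subset (s := G)
        apply hball
        rw [Metric.mem_ball]
        have h1 : min ε (ε' / 2) ≤ ε' / 2 := min_le_right _ _
        linarith
    · have hx₀U : x₀ ∈ S.U := hbdryU x₀ hx₀ hint
      obtain ⟨ρu, hρu0, hballU⟩ := Metric.isOpen_iff.1 hUopen x₀ hx₀U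
      set s := min ε (min (S.m / (9 * S.k)) (ρu / 4)) with hsdef
      have hs0 : 0 < s := lt_min hε (lt_min (div_pos hm (by linarith)) (by linarith))
      have h9k : 9 * (S.k * s) ≤ S.m := by
        have h1 : s ≤ S.m / (9 * S.k) := le_trans (min_le_right _ _) (min_le_left _ _)
        rw [le_div_iff₀ (by linarith)] at h1
        linarith
      have hsub3 : Metric.closedBall x₀ (3 * s) ⊆ S.U := by
        intro x hx
        rw [Metric.mem_closedBall] at hx
        apply hballU
        rw [Metric.mem_ball]
        have h1 : s ≤ ρu / 4 := le_trans (min_le_right _ _) (min_le_right _ _)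
        linarith
      have hfx₀ : t ≤ S.f x₀ := hx₀
      obtain ⟨q, hq1, hq2⟩ := exists_inner_ball S.f S.U hUopen S.m S.k t hm hk.le hfc1 hgrad
        hglip x₀ hx₀U hfx₀ s hs0 h9k hsub3
      exact ⟨q, s, hs0, min_le_left _ _, hq1.le, hq2⟩
  -- nonconvexity witnesses
  have hGnc' : ∃ x ∈ G, ∃ y ∈ G, ∃ a b : ℝ, 0 ≤ a ∧ 0 ≤ b ∧ a + b = 1 ∧ a • x + b • y ∉ G := by
    by_contra hcon
    push_neg at hcon
    exact hGnc fun x hx y hy a b ha hb hab => hcon x hx y hy a b ha hb hab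
  obtain ⟨a, haG, b, hbG, θ, θ', hθ0, hθ'0, hθsum, hwG⟩ := hGnc'
  have hδw : 0 < Metric.infDist (θ • a + θ' • b) G :=
    (hGclosed.notMem_iff_infDist_pos hGne).1 hwG
  set w := θ • a + θ' • b with hwdef
  clear_value w
  obtain ⟨qa, sa, hsa0, hsaε, hqa_dist, hqa_ball⟩ :=
    hL5 a haG (Metric.infDist w G / 8) (by linarith)
  obtain ⟨qb, sb, hsb0, hsbε, hqb_dist, hqb_ball⟩ :=
    hL5 b hbG (Metric.infDist w G / 8) (by linarith)
  set ς := min sa sb with hςdef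
  have hς0 : 0 < ς := lt_min hsa0 hsb0
  have hqaG : Metric.closedBall qa ς ⊆ G :=
    (Metric.closedBall_subset_closedBall (min_le_left _ _)).trans hqa_ball
  have hqbG : Metric.closedBall qb ς ⊆ G :=
    (Metric.closedBall_subset_closedBall (min_le_right _ _)).trans hqb_ball
  clear_value ς
  set w' := θ • qa + θ' • qb with hw'def
  clear_value w'
  have hww' : dist w' w ≤ Metric.infDist w G / 2 := by
    have h1 : w' - w = θ • (qa - a) + θ' • (qb - b) := by
      rw [hw'def, hwdef]; module
    rw [dist_eq_norm, h1]
    have hθle1 : θ ≤ 1 := by linarith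
    have hθ'le1 : θ' ≤ 1 := by linarith
    have h2 : ‖θ • (qa - a) + θ' • (qb - b)‖ ≤ ‖qa - a‖ + ‖qb - b‖ := by
      calc ‖θ • (qa - a) + θ' • (qb - b)‖ ≤ ‖θ • (qa - a)‖ + ‖θ' • (qb - b)‖ :=
        norm_add_le _ _
      _ ≤ ‖qa - a‖ + ‖qb - b‖ := by
          apply add_le_add
          · rw [norm_smul, Real.norm_eq_abs, abs_of_nonneg hθ0]
            exact mul_le_of_le_one_left (norm_nonneg _) hθle1
          · rw [norm_smul, Real.norm_eq_abs, abs_of_nonneg hθ'0]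
            exact mul_le_of_le_one_left (norm_nonneg _) hθ'le1
    have h3 : ‖qa - a‖ ≤ Metric.infDist w G / 4 := by
      rw [← dist_eq_norm]
      calc dist qa a ≤ 2 * sa := hqa_dist
      _ ≤ Metric.infDist w G / 4 := by linarith
    have h4 : ‖qb - b‖ ≤ Metric.infDist w G / 4 := by
      rw [← dist_eq_norm]
      calc dist qb b ≤ 2 * sb := hqb_dist
      _ ≤ Metric.infDist w G / 4 := by linarith
    linarith
  have hw'G : w' ∉ G := by
    intro hmem
    have h1 : Metric.infDist w G ≤ dist w w' := Metric.infDist_le_dist_of_mem hmem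
    rw [dist_comm] at h1
    linarith
  -- Γ is bounded above
  have hbddΓ : BddAbove {γ : ℝ | 0 < γ ∧ rConvexHull γ G = G} := by
    refine ⟨max (‖qa - qb‖ ^ 2 / (8 * ς)) ς, ?_⟩
    rintro γ ⟨hγ0, hγhull⟩
    by_cases hγς : γ ≤ ς
    · exact le_max_of_le_right hγς
    push_neg at hγς
    have hw'H : w' ∉ rConvexHull γ G := by rw [hγhull]; exact hw'G
    obtain ⟨c, hcG, hcw'⟩ : ∃ c, γ ≤ Metric.infDist c G ∧ dist w' c < γ := by
      by_contra hcon
      push_neg at hcon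
      exact hw'H ((mem_rConvexHull_iff hGne w').2 hcon)
    have hkeyB : ∀ q', Metric.closedBall q' ς ⊆ G → γ + ς ≤ dist c q' := by
      intro q' hq'
      have hq'G : q' ∈ G := hq' (Metric.mem_closedBall_self hς0.le)
      have hn : γ ≤ dist c q' := le_trans hcG (Metric.infDist_le_dist_of_mem hq'G)
      have hn0 : 0 < dist c q' := lt_of_lt_of_le hγ0 hn
      set v := q' + (ς / dist c q') • (c - q') with hvdef
      have hvmem : v ∈ Metric.closedBall q' ς := by
        rw [Metric.mem_closedBall, dist_comm, dist_eq_norm, hvdef]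
        have h1 : q' - (q' + (ς / dist c q') • (c - q')) = -((ς / dist c q') • (c - q')) := by
          abel
        rw [h1, norm_neg, norm_smul, Real.norm_eq_abs,
          abs_of_nonneg (div_nonneg hς0.le hn0.le), ← dist_eq_norm]
        rw [div_mul_eq_mul_div, mul_div_assoc, div_self hn0.ne', mul_one]
      have hvG : v ∈ G := hq' hvmem
      have h2 : γ ≤ dist c v := le_trans hcG (Metric.infDist_le_dist_of_mem hvG)
      have h3 : dist c v = dist c q' - ς := by
        rw [dist_eq_norm, hvdef]
        have h4 : c - (q' + (ς / dist c q') • (c - q')) = (1 - ς / dist c q') • (c - q') := by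
          module
        rw [h4, norm_smul, Real.norm_eq_abs, ← dist_eq_norm,
          abs_of_nonneg (by rw [sub_nonneg, div_le_one hn0]; linarith :
            (0:ℝ) ≤ 1 - ς / dist c q')]
        field_simp
      linarith
    have hna := hkeyB qa hqaG
    have hnb := hkeyB qb hqbG
    rw [hw'def, dist_comm] at hcw'
    have hfinal := lemA c qa qb θ θ' γ ς hθ0 hθ'0 hθsum hγ0 hς0 hna hnb hcw'
    have hlast : γ < ‖qa - qb‖ ^ 2 / (8 * ς) := by
      rw [lt_div_iff₀ (by linarith)]
      exact hfinal
    exact le_max_of_le_left hlast.le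
  -- the supremum
  set Γ := {γ : ℝ | 0 < γ ∧ rConvexHull γ G = G} with hΓdef
  have hr₁Γ : r₁ ∈ Γ := ⟨hr₁pos, hr₁hull⟩
  have hr₁le : r₁ ≤ sSup Γ := le_csSup hbddΓ hr₁Γ
  have hr0pos : 0 < sSup Γ := lt_of_lt_of_le hr₁pos hr₁le
  have hr0Γ : r0 S.f t = sSup Γ := by unfold r0; rw [hΓdef, hGdef]
  have hrgt : sSup Γ < r := by rw [← hr0Γ]; exact hr
  have hrpos : 0 < r := hr0pos.trans hrgt
  set r' := (sSup Γ + r) / 2 with hr'def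
  have hr'pos : 0 < r' := by rw [hr'def]; linarith
  have hr'lt : r' < r := by rw [hr'def]; linarith
  have hr0r' : sSup Γ < r' := by rw [hr'def]; linarith
  clear_value r'
  have hne : rConvexHull r' G ≠ G := by
    intro h
    exact absurd (le_csSup hbddΓ ⟨hr'pos, h⟩) (not_le.2 hr0r')
  obtain ⟨y, hyH, hyG⟩ : ∃ y ∈ rConvexHull r' G, y ∉ G :=
    Set.not_subset.1 fun hsub => hne (hsub.antisymm (subset_rConvexHull r' G))
  have hδpos : 0 < Metric.infDist y G := (hGclosed.notMem_iff_infDist_pos hGne).1 hyG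
  set δ := Metric.infDist y G with hδdef
  have hyHc : ∀ c, r' ≤ Metric.infDist c G → r' ≤ dist y c :=
    (mem_rConvexHull_iff hGne y).1 hyH
  have hδr' : δ < r' := by
    by_contra hcon
    push_neg at hcon
    have h1 := hyHc y (by rw [← hδdef]; exact hcon)
    rw [dist_self] at h1
    linarith
  clear_value δ
  obtain ⟨g, hgG, hgdist⟩ := hGcomp.exists_infDist_eq_dist hGne y
  have hgdist' : δ = dist y g := by rw [hδdef]; exact hgdist
  have hkeyY : ∀ e, r ≤ Metric.infDist e G → r ≤ dist y e := by
    intro e he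
    by_cases hcase : dist y e ≤ r - r'
    · exfalso
      have h1 : Metric.infDist e G ≤ Metric.infDist y G + dist e y :=
        Metric.infDist_le_infDist_add_dist
      rw [dist_comm] at h1
      rw [← hδdef] at h1
      linarith
    push_neg at hcase
    have hn0 : 0 < dist y e := lt_of_le_of_lt (by linarith) hcase
    set e' := e + ((r - r') / dist y e) • (y - e) with he'def
    have hee' : dist e e' = r - r' := by
      rw [dist_comm, dist_eq_norm, he'def, add_sub_cancel_left, norm_smul, Real.norm_eq_abs,
        abs_of_nonneg (div_nonneg (by linarith) hn0.le), ← dist_eq_norm]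
      rw [div_mul_eq_mul_div, mul_div_assoc, div_self hn0.ne', mul_one]
    have he'G : r' ≤ Metric.infDist e' G := by
      have h1 : Metric.infDist e G ≤ Metric.infDist e' G + dist e e' :=
        Metric.infDist_le_infDist_add_dist
      rw [hee'] at h1
      linarith
    have h2 := hyHc e' he'G
    have h3 : dist y e' = dist y e - (r - r') := by
      rw [dist_eq_norm, he'def]
      have h4 : y - (e + ((r - r') / dist y e) • (y - e))
          = (1 - (r - r') / dist y e) • (y - e) := by module
      rw [h4, norm_smul, Real.norm_eq_abs, ← dist_eq_norm,
        abs_of_nonneg (by rw [sub_nonneg, div_le_one hn0]; linarith :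
          (0:ℝ) ≤ 1 - (r - r') / dist y e)]
      field_simp
    linarith
  -- thickening: points near G have f > l - ζ
  have hWopen : IsOpen (interior (levelSet S.f (S.u + S.ζ)) ∪
      (S.U ∩ S.f ⁻¹' Set.Ioi (S.l - S.ζ))) :=
    isOpen_interior.union (hfc1.continuousOn.isOpen_inter_preimage hUopen isOpen_Ioi)
  have hGW : G ⊆ interior (levelSet S.f (S.u + S.ζ)) ∪
      (S.U ∩ S.f ⁻¹' Set.Ioi (S.l - S.ζ)) := by
    intro x hx
    by_cases hcase : x ∈ interior (levelSet S.f (S.u + S.ζ))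
    · exact Or.inl hcase
    · refine Or.inr ⟨hUsub ⟨subset_closure (hGlζ hx), hcase⟩, ?_⟩
      have hx' : t ≤ S.f x := hx
      simp only [Set.mem_preimage, Set.mem_Ioi]
      linarith [ht.1]
  obtain ⟨η, hη0, hthick⟩ := hGcomp.exists_thickening_subset_open hWopen hGW
  have hfW : ∀ x, Metric.infDist x G < η → S.l - S.ζ < S.f x := by
    intro x hx
    have hmem := hthick ((Metric.mem_thickening_iff_infDist_lt hGne).2 hx)
    rcases hmem with hmem | hmem
    · have hx0 : x ∈ levelSet S.f (S.u + S.ζ) := interior_subset hmem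
      have hx' : S.u + S.ζ ≤ S.f x := hx0
      linarith
    · simpa using hmem.2
  -- interior ball near g
  obtain ⟨q, s, hs0, hsε, hqg, hqball⟩ := hL5 g hgG ((r - r') / 4) (by linarith)
  have hqG : q ∈ G := hqball (Metric.mem_closedBall_self hs0.le)
  set Δ := dist y q with hΔdef
  have hΔδ : δ ≤ Δ := by
    rw [hδdef, hΔdef]
    exact Metric.infDist_le_dist_of_mem hqG
  have hΔpos : 0 < Δ := lt_of_lt_of_le hδpos hΔδ
  have hΔle : Δ ≤ δ + 2 * s := by
    rw [hΔdef, hgdist']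
    calc dist y q ≤ dist y g + dist g q := dist_triangle _ _ _
    _ ≤ dist y g + 2 * s := by
        rw [dist_comm g q]
        linarith [hqg]
  clear_value Δ
  have hδ2s : δ + 2 * s < r := by linarith
  have hkeyQ : ∀ e, r ≤ Metric.infDist e G → r + s ≤ dist q e := by
    intro e he
    have hn : r ≤ dist e q := le_trans he (Metric.infDist_le_dist_of_mem hqG)
    have hn0 : 0 < dist e q := lt_of_lt_of_le hrpos hn
    set v := q + (s / dist e q) • (e - q) with hvdef
    have hvmem : v ∈ Metric.closedBall q s := by
      rw [Metric.mem_closedBall, dist_comm, dist_eq_norm, hvdef]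
      have h1 : q - (q + (s / dist e q) • (e - q)) = -((s / dist e q) • (e - q)) := by abel
      rw [h1, norm_neg, norm_smul, Real.norm_eq_abs,
        abs_of_nonneg (div_nonneg hs0.le hn0.le), ← dist_eq_norm, dist_comm e q]
      rw [div_mul_eq_mul_div, mul_div_assoc, dist_comm q e, div_self hn0.ne', mul_one]
    have h2 : Metric.infDist e G ≤ dist e v := Metric.infDist_le_dist_of_mem (hqball hvmem)
    have h3 : dist e v = dist e q - s := by
      rw [dist_eq_norm, hvdef]
      have h4 : e - (q + (s / dist e q) • (e - q)) = (1 - s / dist e q) • (e - q) := by module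
      rw [h4, norm_smul, Real.norm_eq_abs, ← dist_eq_norm,
        abs_of_nonneg (by rw [sub_nonneg, div_le_one hn0]; linarith :
          (0:ℝ) ≤ 1 - s / dist e q)]
      field_simp
    rw [dist_comm]
    linarith
  -- the segment parameter
  have hΔsq : 0 < Δ ^ 2 := pow_pos hΔpos 2
  have hΔne : Δ ≠ 0 := hΔpos.ne'
  have hprod : Δ * (Δ - δ) < 2 * r * s := by
    have hp1 : Δ * (Δ - δ) ≤ (δ + 2 * s) * (2 * s) :=
      mul_le_mul hΔle (by linarith) (by linarith) (by linarith)
    have hp2 : (δ + 2 * s) * (2 * s) < r * (2 * s) :=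
      mul_lt_mul_of_pos_right hδ2s (by linarith)
    have hp3 : r * (2 * s) = 2 * r * s := by ring
    linarith only [hp1, hp2, hp3]
  set A0 := 1 - δ / Δ with hA0def
  have hA0nn : 0 ≤ A0 := by
    rw [hA0def, sub_nonneg, div_le_one hΔpos]
    exact hΔδ
  have hA0lt1 : A0 < 1 := by
    rw [hA0def]
    have h1 : 0 < δ / Δ := div_pos hδpos hΔpos
    linarith
  clear_value A0
  set B0 := min (2 * r * s / Δ ^ 2) 1 with hB0def
  have hA0B0 : A0 < B0 := by
    rw [hB0def, lt_min_iff]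
    refine ⟨?_, hA0lt1⟩
    rw [hA0def, lt_div_iff₀ hΔsq]
    have h1 : (1 - δ / Δ) * Δ ^ 2 = Δ * (Δ - δ) := by
      field_simp
    rw [h1]
    exact hprod
  clear_value B0
  set lam := (A0 + B0) / 2 with hlamdef
  have hlamA : A0 < lam := by rw [hlamdef]; linarith only [hA0B0]
  have hlamB : lam < B0 := by rw [hlamdef]; linarith only [hA0B0]
  clear_value lam
  have hlam0 : 0 < lam := lt_of_le_of_lt hA0nn hlamA
  have hlamB' : lam < min (2 * r * s / Δ ^ 2) 1 := by rw [← hB0def]; exact hlamB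
  have hlam1 : lam < 1 := lt_of_lt_of_le hlamB' (min_le_right _ _)
  have hlam2rs : lam * Δ ^ 2 < 2 * r * s := by
    have h1 : lam < 2 * r * s / Δ ^ 2 := lt_of_lt_of_le hlamB' (min_le_left _ _)
    rw [lt_div_iff₀ hΔsq] at h1
    linarith only [h1]
  set β := (1 - lam) * (2 * r * s - lam * Δ ^ 2) with hβdef
  have hβ0 : 0 < β := by
    rw [hβdef]
    exact mul_pos (by linarith) (by linarith)
  clear_value β
  -- depth along the segment
  have hdepth : ∀ l ∈ Set.Icc (0:ℝ) lam, ∀ e, r ≤ Metric.infDist e G →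
      r ^ 2 + β ≤ dist (q + l • (y - q)) e ^ 2 := by
    rintro l ⟨hl0, hllam⟩ e he
    have hlamrs : lam * dist y q ^ 2 ≤ 2 * r * s := by
      rw [← hΔdef]
      exact hlam2rs.le
    have hthis := lemB q y e l lam r s hl0 hllam hlam1 hrpos.le hs0.le hlamrs
      (hkeyQ e he) (hkeyY e he)
    rw [hβdef, hΔdef]
    exact hthis
  -- intermediate value theorem
  have hcont : Continuous fun l : ℝ => Metric.infDist (q + l • (y - q)) G := by
    apply Continuous.comp (Metric.continuous_infDist_pt G)
    exact continuous_const.add (continuous_id.smul continuous_const)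
  have hz0 : Metric.infDist (q + (0:ℝ) • (y - q)) G = 0 := by
    rw [zero_smul, add_zero]
    exact Metric.infDist_zero_of_mem hqG
  have hdistylam : dist y (q + lam • (y - q)) = (1 - lam) * Δ := by
    rw [dist_eq_norm]
    have h1 : y - (q + lam • (y - q)) = (1 - lam) • (y - q) := by module
    rw [h1, norm_smul, Real.norm_eq_abs, abs_of_nonneg (by linarith : (0:ℝ) ≤ 1 - lam),
      ← dist_eq_norm, ← hΔdef]
  have hφlam : 0 < Metric.infDist (q + lam • (y - q)) G := by
    have h1 : Metric.infDist y G ≤ Metric.infDist (q + lam • (y - q)) G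
        + dist y (q + lam • (y - q)) := Metric.infDist_le_infDist_add_dist
    have h2 : (1 - lam) * Δ < δ := by
      have h3 : 1 - lam < δ / Δ := by rw [hA0def] at hlamA; linarith
      calc (1 - lam) * Δ < (δ / Δ) * Δ := mul_lt_mul_of_pos_right h3 hΔpos
      _ = δ := div_mul_cancel₀ δ hΔne
    rw [hdistylam, ← hδdef] at h1
    linarith
  set vstar := min (Metric.infDist (q + lam • (y - q)) G) (η / 2) with hvdef
  have hv0 : 0 < vstar := by
    rw [hvdef]
    exact lt_min hφlam (by linarith)
  have hvle : vstar ≤ Metric.infDist (q + lam • (y - q)) G := by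
    rw [hvdef]; exact min_le_left _ _
  have hvη : vstar ≤ η / 2 := by
    rw [hvdef]; exact min_le_right _ _
  clear_value vstar
  have hIVT := intermediate_value_Icc hlam0.le hcont.continuousOn
  have hvmem : vstar ∈ Set.Icc (Metric.infDist (q + (0:ℝ) • (y - q)) G)
      (Metric.infDist (q + lam • (y - q)) G) := by
    rw [hz0]
    exact ⟨hv0.le, hvle⟩
  obtain ⟨lstar, hlstar, hlsval⟩ := hIVT hvmem
  have hzinf0 : Metric.infDist (q + lstar • (y - q)) G = vstar := hlsval
  set z := q + lstar • (y - q) with hzdef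
  clear_value z
  -- the radius
  set ρ := min (min (vstar / 4) 1) (β / (2 * r + 1)) with hρdef
  have hρ0 : 0 < ρ := by
    rw [hρdef]
    exact lt_min (lt_min (by linarith) one_pos) (div_pos hβ0 (by linarith))
  have hρv : ρ ≤ vstar / 4 := by
    rw [hρdef]; exact le_trans (min_le_left _ _) (min_le_left _ _)
  have hρ1 : ρ ≤ 1 := by
    rw [hρdef]; exact le_trans (min_le_left _ _) (min_le_right _ _)
  have hρβ : ρ ≤ β / (2 * r + 1) := by
    rw [hρdef]; exact min_le_right _ _
  clear_value ρ
  have hrρ : (r + ρ) ^ 2 ≤ r ^ 2 + β := by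
    have h1 : ρ * (2 * r + 1) ≤ β := by
      rw [← le_div_iff₀ (by linarith : (0:ℝ) < 2 * r + 1)]
      exact hρβ
    have h2 : ρ * (2 * r + ρ) ≤ ρ * (2 * r + 1) :=
      mul_le_mul_of_nonneg_left (by linarith) hρ0.le
    nlinarith only [h1, h2]
  have hzdist : ∀ e, r ≤ Metric.infDist e G → r + ρ ≤ dist z e := by
    intro e he
    have h1 := hdepth lstar hlstar e he
    rw [← hzdef] at h1
    have h2 : (r + ρ) ^ 2 ≤ dist z e ^ 2 := le_trans hrρ h1
    exact le_of_sq_le_sq' _ _ h2 (by linarith) dist_nonneg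
  have hzinf : Metric.infDist z G = vstar := hzinf0
  have hball3 : ∀ x ∈ Metric.ball z ρ, 3 * ρ ≤ Metric.infDist x G := by
    intro x hx
    have h1 : Metric.infDist z G ≤ Metric.infDist x G + dist z x :=
      Metric.infDist_le_infDist_add_dist
    have h3 : dist z x < ρ := by rw [dist_comm]; exact Metric.mem_ball.1 hx
    rw [hzinf] at h1
    linarith
  refine ⟨z, ρ, hρ0, ?_, hball3, ?_, ?_, ?_⟩
  · -- ball ⊆ hull
    intro x hx
    rw [mem_rConvexHull_iff hGne]
    intro c hc
    have h1 := hzdist c hc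
    have h2 : dist z c ≤ dist z x + dist x c := dist_triangle _ _ _
    have h3 : dist z x < ρ := by rw [dist_comm]; exact Metric.mem_ball.1 hx
    linarith
  · -- disjoint from G + ball 0 (2ρ)
    rw [Set.eq_empty_iff_forall_notMem]
    rintro x ⟨hx1, hx2⟩
    rw [Set.mem_add] at hx2
    obtain ⟨g1, hg1, v1, hv1, hsum⟩ := hx2
    have h5 : Metric.infDist x G ≤ dist x g1 := Metric.infDist_le_dist_of_mem hg1
    have h6 : dist x g1 = ‖v1‖ := by
      rw [← hsum, dist_eq_norm, add_sub_cancel_left]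
    have h7 : ‖v1‖ < 2 * ρ := mem_ball_zero_iff.1 hv1
    have h8 := hball3 x hx1
    linarith
  · -- disjoint from G
    rw [Set.eq_empty_iff_forall_notMem]
    rintro x ⟨hx1, hx2⟩
    have h1 := hball3 x hx1
    rw [Metric.infDist_zero_of_mem hx2] at h1
    linarith
  · -- f > l - ζ on the ball
    intro x hx
    apply hfW
    have h1 : Metric.infDist x G ≤ Metric.infDist z G + dist x z :=
      Metric.infDist_le_infDist_add_dist
    have h3 : dist x z < ρ := Metric.mem_ball.1 hx
    rw [hzinf] at h1
    linarith
end
end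

section
/- Let A ⊆ ℝ^d be a compact set and let 0 < s < r. If A satisfies the morphological closing identity (A ⊕ B_s[0]) ⊖ B_s[0] = A (i.e., A is s-convex in the sense that its closing by the closed ball of radius s equals A), then (A ⊕ B_s[0]) ⊖ B_r[0] = A ⊖ B_{r−s}[0]. -/
open MeasureTheory Filter Set
open scoped Pointwise

noncomputable section

/-- Minkowski erosion `C ⊖ D = {x : x + D ⊆ C}`. -/
def erosion {d : ℕ} (C D : Set (EuclideanSpace ℝ (Fin d))) :
    Set (EuclideanSpace ℝ (Fin d)) := {x | ∀ y ∈ D, x + y ∈ C}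

theorem erosion_add {d : ℕ} (C D E : Set (EuclideanSpace ℝ (Fin d))) :
    erosion C (D + E) = erosion (erosion C E) D := by
  ext x
  constructor
  · intro hx y hy z hz
    simpa only [add_assoc] using hx (y + z) (add_mem_add hy hz)
  · rintro hx _ ⟨y, hy, z, hz, rfl⟩
    simpa only [add_assoc] using hx y hy z hz

theorem statement18_general {d : ℕ} (A : Set (EuclideanSpace ℝ (Fin d)))
    (s r : ℝ) (hs : 0 < s) (hsr : s < r)
    (hclosing : erosion (A + Metric.closedBall (0 : EuclideanSpace ℝ (Fin d)) s)
      (Metric.closedBall (0 : EuclideanSpace ℝ (Fin d)) s) = A) :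
    erosion (A + Metric.closedBall (0 : EuclideanSpace ℝ (Fin d)) s)
      (Metric.closedBall (0 : EuclideanSpace ℝ (Fin d)) r) =
    erosion A (Metric.closedBall (0 : EuclideanSpace ℝ (Fin d)) (r - s)) := by
  have hball : Metric.closedBall (0 : EuclideanSpace ℝ (Fin d)) r =
      Metric.closedBall 0 (r - s) + Metric.closedBall 0 s := by
    rw [closedBall_add_closedBall (by linarith) hs.le, add_zero, sub_add_cancel]
  rw [hball, erosion_add, hclosing]

/-- Morphological identity used in the proof of Theorem 3.2: if `A` is compact,
`0 < s < r` and the closing of `A` by the closed ball of radius `s` equals `A`, then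
`(A ⊕ B_s[0]) ⊖ B_r[0] = A ⊖ B_{r-s}[0]`. -/
theorem statement18 {d : ℕ} (A : Set (EuclideanSpace ℝ (Fin d))) (hA : IsCompact A)
    (s r : ℝ) (hs : 0 < s) (hsr : s < r)
    (hclosing : erosion (A + Metric.closedBall (0 : EuclideanSpace ℝ (Fin d)) s)
      (Metric.closedBall (0 : EuclideanSpace ℝ (Fin d)) s) = A) :
    erosion (A + Metric.closedBall (0 : EuclideanSpace ℝ (Fin d)) s)
      (Metric.closedBall (0 : EuclideanSpace ℝ (Fin d)) r) =
    erosion A (Metric.closedBall (0 : EuclideanSpace ℝ (Fin d)) (r - s)) :=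
  statement18_general A s r hs hsr hclosing
end
end
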